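/- Let n ≥ 2 and let a_0, …, a_n be pairwise relatively prime integers with a_i ≥ 2 for all i. Then exactly one of the following holds: (1) n = 2 and {a_0, a_1, a_2} = {2, 3, 5} (as a set), in which case Σ_{j=0}^{n} ∏_{i≠j} a_i = 31 > 30 = (n−1)·∏_{i=0}^n a_i; or (2) Σ_{j=0}^{n} ∏_{i≠j} a_i < (n−1)·∏_{i=0}^n a_i. In particular the canonical index I_𝐚 = (n−1)·∏ a_i − Σ_j ∏_{i≠j} a_i is negative exactly when {a_0,…,a_n} = {2,3,5} and is positive otherwise. -/

import Mathlib

/-!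
Dividing by `∏ a i`, the claim compares `∑ 1 / a j` with `n - 1`. Pairwise coprime integers are
distinct and at most one of them equals `2`, so `∑ 1 / a j ≤ 1 / 2 + n / 3`, which is `< n - 1`
once `n ≥ 3`. For three of them, sorted as `x < y < z`, either `x ≥ 3` and the sum is at most
`1 / 3 + 1 / 4 + 1 / 5`, or `x = 2`, `y` and `z` are odd, and only `(2, 3, 5)` reaches `1`.
-/

open Finset Function

theorem Int.injective_of_pairwise_gcd_eq_one {ι : Type*} {a : ι → ℤ} (h2 : ∀ i, 2 ≤ a i)
    (hcop : Pairwise fun i j => Int.gcd (a i) (a j) = 1) : Injective a := by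
  intro i j hij
  by_contra hne
  have h : Int.gcd (a i) (a j) = 1 := hcop hne
  rw [hij, Int.gcd_self] at h
  have := h2 j
  omega

section SumProdErase

variable {ι : Type*} [Fintype ι] [DecidableEq ι]

theorem sum_prod_erase_comp_equiv {M : Type*} [CommSemiring M] (a : ι → M) (e : ι ≃ ι) :
    ∑ j, ∏ i ∈ univ.erase j, a (e i) = ∑ j, ∏ i ∈ univ.erase j, a i := by
  conv_rhs => rw [← e.sum_comp]
  refine sum_congr rfl fun j _ => ?_
  have h := prod_map (univ.erase j) e.toEmbedding a
  rw [map_erase, map_univ_equiv] at h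
  exact h.symm

theorem six_mul_sum_prod_erase_le {a : ι → ℤ} (ha : Injective a) (h2 : ∀ i, 2 ≤ a i) :
    6 * ∑ j, ∏ i ∈ univ.erase j, a i ≤ (2 * Fintype.card ι + 1) * ∏ i, a i := by
  set P := ∏ i, a i
  have hP : 0 ≤ P := prod_nonneg fun i _ => by linarith [h2 i]
  have hterm (j : ι) : 6 * ∏ i ∈ univ.erase j, a i ≤ (2 + if a j = 2 then 1 else 0) * P := by
    rw [← show a j * ∏ i ∈ univ.erase j, a i = P from mul_prod_erase univ a (mem_univ j)]
    have hc : 0 ≤ ∏ i ∈ univ.erase j, a i := prod_nonneg fun i _ => by linarith [h2 i]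
    split_ifs with h
    · rw [h]; linarith
    · have : 3 ≤ a j := by have := h2 j; omega
      nlinarith
  have htwo : #{j | a j = 2} ≤ 1 := card_le_one.2 fun i hi j hj => ha (by simp_all)
  calc 6 * ∑ j, ∏ i ∈ univ.erase j, a i = ∑ j, 6 * ∏ i ∈ univ.erase j, a i := mul_sum _ _ _
    _ ≤ ∑ j, (2 + if a j = 2 then 1 else 0) * P := sum_le_sum fun j _ => hterm j
    _ = (2 * Fintype.card ι + #{j | a j = 2}) * P := by
      rw [← sum_mul, sum_add_distrib, sum_boole]; simp [mul_comm]
    _ ≤ (2 * Fintype.card ι + 1) * P := by gcongr; exact_mod_cast htwo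

theorem sum_prod_erase_lt {a : ι → ℤ} (ha : Injective a) (h2 : ∀ i, 2 ≤ a i)
    (hcard : 4 ≤ Fintype.card ι) :
    ∑ j, ∏ i ∈ univ.erase j, a i < (Fintype.card ι - 2) * ∏ i, a i := by
  have hP : 0 < ∏ i, a i := prod_pos fun i _ => by linarith [h2 i]
  have hcard' : (4 : ℤ) ≤ Fintype.card ι := by exact_mod_cast hcard
  nlinarith [six_mul_sum_prod_erase_le ha h2]

end SumProdErase

theorem Fin.sum_prod_erase_three {M : Type*} [CommSemiring M] (a : Fin 3 → M) :
    ∑ j, ∏ i ∈ univ.erase j, a i = a 1 * a 2 + a 0 * a 2 + a 0 * a 1 := by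
  rw [Fin.sum_univ_three, show univ.erase (0 : Fin 3) = {1, 2} from rfl,
    show univ.erase (1 : Fin 3) = {0, 2} from rfl, show univ.erase (2 : Fin 3) = {0, 1} from rfl,
    prod_pair (by decide), prod_pair (by decide), prod_pair (by decide)]

theorem eq_two_three_five_or_lt {x y z : ℤ} (hx : 2 ≤ x) (hxy : x < y) (hyz : y < z)
    (hcxy : Int.gcd x y = 1) (hcxz : Int.gcd x z = 1) :
    (x = 2 ∧ y = 3 ∧ z = 5) ∨ y * z + x * z + x * y < x * y * z := by
  rcases hx.eq_or_lt with rfl | hx3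
  · have hy : Odd y := Int.isCoprime_two_left.1 (Int.isCoprime_iff_gcd_eq_one.2 hcxy)
    have hz : Odd z := Int.isCoprime_two_left.1 (Int.isCoprime_iff_gcd_eq_one.2 hcxz)
    obtain ⟨k, rfl⟩ := hy
    obtain ⟨l, rfl⟩ := hz
    rcases (show k = 1 ∧ l = 2 ∨ k = 1 ∧ 3 ≤ l ∨ 2 ≤ k ∧ 3 ≤ l by omega) with
      ⟨rfl, rfl⟩ | ⟨rfl, hl⟩ | ⟨hk, hl⟩
    · left; norm_num
    · right; nlinarith
    · right; nlinarith
  · have hx0 : 0 < x := by omega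
    have hz0 : 0 < z := by omega
    have hyz0 : 0 < y * z := mul_pos (by omega) hz0
    right
    nlinarith [mul_lt_mul_of_pos_right hxy hz0, mul_lt_mul_of_pos_left hyz hx0,
      mul_nonneg (by omega : (0 : ℤ) ≤ x - 3) hyz0.le]

theorem range_eq_two_three_five_or_sum_prod_erase_lt {a : Fin 3 → ℤ} (h2 : ∀ i, 2 ≤ a i)
    (hcop : Pairwise fun i j => Int.gcd (a i) (a j) = 1) :
    (Set.range a = {2, 3, 5} ∧ ∑ j, ∏ i ∈ univ.erase j, a i = 31 ∧ ∏ i, a i = 30) ∨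
      ∑ j, ∏ i ∈ univ.erase j, a i < ∏ i, a i := by
  set σ := Tuple.sort a
  set b := a ∘ σ
  have hb2 (i : Fin 3) : 2 ≤ b i := h2 (σ i)
  have hbcop : Pairwise fun i j => Int.gcd (b i) (b j) = 1 := fun i j hij =>
    hcop (σ.injective.ne hij)
  have hmono : StrictMono b := (Tuple.monotone_sort a).strictMono_of_injective
    (Int.injective_of_pairwise_gcd_eq_one hb2 hbcop)
  have hS : ∑ j, ∏ i ∈ univ.erase j, a i = b 1 * b 2 + b 0 * b 2 + b 0 * b 1 := by
    rw [← Fin.sum_prod_erase_three, ← sum_prod_erase_comp_equiv a σ]; rfl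
  have hP : ∏ i, a i = b 0 * b 1 * b 2 := by
    rw [← Fin.prod_univ_three b, ← Equiv.prod_comp σ a]; rfl
  have hR : Set.range a = Set.range b := (σ.surjective.range_comp a).symm
  -- otherwise `simp` turns `Set.range b` back into `Set.range a`
  clear_value b
  rw [hS, hP, hR]
  rcases eq_two_three_five_or_lt (hb2 0) (hmono (show (0 : Fin 3) < 1 by decide))
      (hmono (show (1 : Fin 3) < 2 by decide)) (hbcop (show (0 : Fin 3) ≠ 1 by decide))
      (hbcop (show (0 : Fin 3) ≠ 2 by decide)) with ⟨hx, hy, hz⟩ | hlt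
  · left
    refine ⟨?_, by rw [hx, hy, hz]; norm_num, by rw [hx, hy, hz]; norm_num⟩
    ext
    simp [Fin.exists_fin_succ, hx, hy, hz, eq_comm]
  · exact Or.inr hlt

/-- For `n ≥ 2` and pairwise relatively prime integers `a i ≥ 2`, exactly one of the
following holds: either `n = 2` and `{a 0, a 1, a 2} = {2, 3, 5}` as a set, in which case
`∑ j, ∏_{i ≠ j} a i = 31 > 30 = (n-1) * ∏ a i`; or
`∑ j, ∏_{i ≠ j} a i < (n-1) * ∏ a i`. -/
theorem stmt3 (n : ℕ) (hn : 2 ≤ n) (a : Fin (n + 1) → ℤ)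
    (h2 : ∀ i, 2 ≤ a i)
    (hcop : ∀ i j, i ≠ j → Int.gcd (a i) (a j) = 1) :
    Xor'
      (n = 2 ∧ Set.range a = ({2, 3, 5} : Set ℤ) ∧
        (∑ j, ∏ i ∈ Finset.univ.erase j, a i) = 31 ∧
        ((n : ℤ) - 1) * (∏ i, a i) = 30)
      ((∑ j, ∏ i ∈ Finset.univ.erase j, a i) < ((n : ℤ) - 1) * (∏ i, a i)) := by
  refine (xor_iff_or_and_not_and _ _).2 ⟨?_, fun ⟨⟨_, _, h31, h30⟩, hlt⟩ => by linarith⟩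
  rcases hn.eq_or_lt with rfl | h3
  · simpa using range_eq_two_three_five_or_sum_prod_erase_lt h2 hcop
  · right
    have hlt := sum_prod_erase_lt (Int.injective_of_pairwise_gcd_eq_one h2 hcop) h2
      (by simpa using h3.nat_succ_le)
    rwa [Fintype.card_fin, Nat.cast_succ, show (n : ℤ) + 1 - 2 = n - 1 by ring] at hlt
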